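/- arXiv:2206.09238 — 2 statements merged into one kernel-verified Lean document; each statement's English description precedes it below -/
import Mathlib

section
/- Let g: ℝ^d → ℝ be differentiable and μ-smooth with μ < λ, and let δ*(x) denote the unique maximizer of δ ↦ g(x+δ) - (λ/2)‖δ‖². Then the map x ↦ δ*(x) is Lipschitz with constant at most μ/(λ - μ): ‖δ*(x) - δ*(x')‖₂ ≤ (μ/(λ-μ))‖x - x'‖₂. -/
open InnerProductSpace

/-!
At the maximizer the first-order condition reads `∇g(x + δ*(x)) = λ δ*(x)`, so `δ*` solves a
fixed-point equation for `∇g / λ`. Comparing the conditions at `x` and `x'` and using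
`μ`-smoothness gives `λ‖δ*(x) - δ*(x')‖ ≤ μ(‖x - x'‖ + ‖δ*(x) - δ*(x')‖)`, and `μ < λ` lets
the second term be absorbed.
-/

theorem gradient_eq_smul_of_isMaxOn_sub_norm_sq {E : Type*} [NormedAddCommGroup E]
    [InnerProductSpace ℝ E] [CompleteSpace E] {g : E → ℝ} {lam : ℝ} {x a : E}
    (hg : DifferentiableAt ℝ g (x + a))
    (hmax : IsMaxOn (fun δ => g (x + δ) - lam / 2 * ‖δ‖ ^ 2) Set.univ a) :
    gradient g (x + a) = lam • a := by
  have hshift : HasFDerivAt (fun δ => g (x + δ)) (fderiv ℝ g (x + a)) a :=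
    (hasFDerivAt_comp_add_left x).mpr hg.hasFDerivAt
  have hpen : HasFDerivAt (fun δ : E => lam / 2 * ‖δ‖ ^ 2) ((lam / 2) • 2 • innerSL ℝ a) a :=
    (hasStrictFDerivAt_norm_sq a).hasFDerivAt.const_mul _
  have hcrit := (hmax.isLocalMax Filter.univ_mem).hasFDerivAt_eq_zero (hshift.sub hpen)
  have hdual : fderiv ℝ g (x + a) = toDual ℝ E (lam • a) := by
    rw [sub_eq_zero.mp hcrit]
    ext y
    simp only [smul_apply, coe_innerSL_apply, nsmul_eq_mul, Nat.cast_ofNat,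
      smul_eq_mul, map_smul, toDual_apply_apply]
    ring
  rw [gradient, hdual, LinearIsometryEquiv.symm_apply_apply]

theorem norm_sub_le_of_smul_eq_of_lipschitz {F : Type*} [NormedAddCommGroup F]
    [NormedSpace ℝ F] {T : F → F} {μ lam : ℝ} {x x' a b : F} (hμ0 : 0 ≤ μ) (hμ : μ < lam)
    (hT : ∀ y y', ‖T y - T y'‖ ≤ μ * ‖y - y'‖)
    (ha : T (x + a) = lam • a) (hb : T (x' + b) = lam • b) :
    ‖a - b‖ ≤ μ / (lam - μ) * ‖x - x'‖ := by
  have hlam : 0 < lam := hμ0.trans_lt hμ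
  have hcontr : lam * ‖a - b‖ ≤ μ * (‖x - x'‖ + ‖a - b‖) :=
    calc lam * ‖a - b‖ = ‖T (x + a) - T (x' + b)‖ := by
          rw [ha, hb, ← smul_sub, norm_smul, Real.norm_of_nonneg hlam.le]
      _ ≤ μ * ‖(x - x') + (a - b)‖ := by
          convert hT (x + a) (x' + b) using 3
          abel
      _ ≤ μ * (‖x - x'‖ + ‖a - b‖) := by gcongr; exact norm_add_le _ _
  rw [div_mul_eq_mul_div, le_div_iff₀ (sub_pos.mpr hμ)]
  linarith

/-- If `g` is differentiable and `μ`-smooth with `μ < lam`, and `δstar x` is the unique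
maximizer of `δ ↦ g(x+δ) - (lam/2)‖δ‖²`, then `x ↦ δstar x` is `(μ/(lam-μ))`-Lipschitz. -/
theorem optimal_attack_lipschitz (d : ℕ)
    (g : EuclideanSpace ℝ (Fin d) → ℝ) (lam μ : ℝ)
    (hg : Differentiable ℝ g) (hμ0 : 0 ≤ μ) (hμ : μ < lam)
    (hsmooth : ∀ y y' : EuclideanSpace ℝ (Fin d),
      ‖gradient g y - gradient g y'‖ ≤ μ * ‖y - y'‖)
    (δstar : EuclideanSpace ℝ (Fin d) → EuclideanSpace ℝ (Fin d))
    (hmax : ∀ x : EuclideanSpace ℝ (Fin d),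
      IsMaxOn (fun δ : EuclideanSpace ℝ (Fin d) => g (x + δ) - lam / 2 * ‖δ‖ ^ 2)
        Set.univ (δstar x)) :
    ∀ x x' : EuclideanSpace ℝ (Fin d),
      ‖δstar x - δstar x'‖ ≤ μ / (lam - μ) * ‖x - x'‖ := by
  intro x x'
  exact norm_sub_le_of_smul_eq_of_lipschitz hμ0 hμ hsmooth
    (gradient_eq_smul_of_isMaxOn_sub_norm_sq (hg _) (hmax x))
    (gradient_eq_smul_of_isMaxOn_sub_norm_sq (hg _) (hmax x'))
end

section
/- Let g: ℝ^d → ℝ be differentiable and μ-smooth with μ < λ, and let δ*(x) be the unique maximizer of δ ↦ g(x+δ) - (λ/2)‖δ‖². Then the perturbed-input map x ↦ x + δ*(x) is Lipschitz with constant at most λ/(λ - μ). -/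
/-!
At the maximizer the first-order condition reads `∇g (x + δ*(x)) = λ δ*(x)`, so `z = x + δ*(x)`
solves `λ (z - x) = ∇g z`. Subtracting this for `x` and `x'` and using `μ`-smoothness gives
`λ ‖z - z'‖ ≤ λ ‖x - x'‖ + μ ‖z - z'‖`.
-/

open InnerProductSpace

theorem IsLocalMax.gradient_eq_smul_of_sub_norm_sq
    {E : Type*} [NormedAddCommGroup E] [InnerProductSpace ℝ E] [CompleteSpace E]
    {g : E → ℝ} {lam : ℝ} {x δ : E} (hg : DifferentiableAt ℝ g (x + δ))
    (hmax : IsLocalMax (fun δ => g (x + δ) - lam / 2 * ‖δ‖ ^ 2) δ) :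
    gradient g (x + δ) = lam • δ := by
  have hshift : HasFDerivAt (fun δ => g (x + δ)) (fderiv ℝ g (x + δ)) δ :=
    hg.hasFDerivAt.comp δ ((hasFDerivAt_id δ).const_add x)
  have hzero := hmax.hasFDerivAt_eq_zero <|
    hshift.sub ((hasStrictFDerivAt_norm_sq δ).hasFDerivAt.const_mul (lam / 2))
  rw [hg.hasGradientAt.hasFDerivAt.fderiv] at hzero
  rw [← sub_eq_zero]
  apply (toDual ℝ E).injective
  ext v
  have := congrArg (· v) hzero
  simp only [toDual_gradient, sub_apply, smul_apply, coe_innerSL_apply, nsmul_eq_mul,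
    Nat.cast_ofNat, smul_eq_mul, zero_apply, map_sub, map_smul, toDual_apply_apply, map_zero] at this ⊢
  linarith

theorem norm_sub_le_div_mul_of_smul_sub_eq
    {E : Type*} [NormedAddCommGroup E] [NormedSpace ℝ E] {lam μ : ℝ} (hμ0 : 0 ≤ μ) (hμ : μ < lam)
    {x x' z z' u u' : E} (hu : u = lam • (z - x)) (hu' : u' = lam • (z' - x'))
    (hlip : ‖u - u'‖ ≤ μ * ‖z - z'‖) :
    ‖z - z'‖ ≤ lam / (lam - μ) * ‖x - x'‖ := by
  have hlam : 0 < lam := hμ0.trans_lt hμ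
  have key : lam * ‖z - z'‖ ≤ lam * ‖x - x'‖ + μ * ‖z - z'‖ :=
    calc lam * ‖z - z'‖ = ‖lam • (x - x') + (u - u')‖ := by
          rw [hu, hu', ← norm_smul_of_nonneg hlam.le]; congr 1; module
      _ ≤ lam * ‖x - x'‖ + μ * ‖z - z'‖ := by
          grw [norm_add_le, norm_smul_of_nonneg hlam.le, hlip]
  rw [div_mul_eq_mul_div, le_div_iff₀ (sub_pos.2 hμ)]
  linarith

theorem perturbed_input_lipschitz_general (d : ℕ)
    (g : EuclideanSpace ℝ (Fin d) → ℝ) (lam μ : ℝ)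
    (hg : Differentiable ℝ g) (hμ : μ < lam)
    (hsmooth : ∀ y y' : EuclideanSpace ℝ (Fin d),
      ‖gradient g y - gradient g y'‖ ≤ μ * ‖y - y'‖)
    (δstar : EuclideanSpace ℝ (Fin d) → EuclideanSpace ℝ (Fin d))
    (hmax : ∀ x : EuclideanSpace ℝ (Fin d),
      IsMaxOn (fun δ : EuclideanSpace ℝ (Fin d) => g (x + δ) - lam / 2 * ‖δ‖ ^ 2)
        Set.univ (δstar x)) :
    ∀ x x' : EuclideanSpace ℝ (Fin d),
      ‖(x + δstar x) - (x' + δstar x')‖ ≤ lam / (lam - μ) * ‖x - x'‖ := by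
  intro x x'
  rcases eq_or_ne x x' with rfl | hne
  · simp
  have hμ0 : 0 ≤ μ := nonneg_of_mul_nonneg_left ((norm_nonneg _).trans (hsmooth x x'))
    (norm_pos_iff.2 (sub_ne_zero.2 hne))
  have hfoc (x) : gradient g (x + δstar x) = lam • (x + δstar x - x) := by
    rw [add_sub_cancel_left]
    exact ((hmax x).isLocalMax Filter.univ_mem).gradient_eq_smul_of_sub_norm_sq (hg _)
  exact norm_sub_le_div_mul_of_smul_sub_eq hμ0 hμ (hfoc x) (hfoc x') (hsmooth _ _)

/-- If `g` is differentiable and `μ`-smooth with `μ < lam`, and `δstar x` is the unique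
maximizer of `δ ↦ g(x+δ) - (lam/2)‖δ‖²`, then `x ↦ x + δstar x` is
`(lam/(lam-μ))`-Lipschitz. -/
theorem perturbed_input_lipschitz (d : ℕ)
    (g : EuclideanSpace ℝ (Fin d) → ℝ) (lam μ : ℝ)
    (hg : Differentiable ℝ g) (hμ0 : 0 ≤ μ) (hμ : μ < lam)
    (hsmooth : ∀ y y' : EuclideanSpace ℝ (Fin d),
      ‖gradient g y - gradient g y'‖ ≤ μ * ‖y - y'‖)
    (δstar : EuclideanSpace ℝ (Fin d) → EuclideanSpace ℝ (Fin d))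
    (hmax : ∀ x : EuclideanSpace ℝ (Fin d),
      IsMaxOn (fun δ : EuclideanSpace ℝ (Fin d) => g (x + δ) - lam / 2 * ‖δ‖ ^ 2)
        Set.univ (δstar x)) :
    ∀ x x' : EuclideanSpace ℝ (Fin d),
      ‖(x + δstar x) - (x' + δstar x')‖ ≤ lam / (lam - μ) * ‖x - x'‖ :=
  perturbed_input_lipschitz_general d g lam μ hg hμ hsmooth δstar hmax
end
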